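/- arXiv:math/0503021 — 5 statements merged into one kernel-verified Lean document; each statement's English description precedes it below -/
import Mathlib

section
/- Let G, F, V be vector spaces over ℂ, let D_min and E be subspaces of V with D_min ∩ E = {0}, and set D = D_min + E. Let A : D → G and K : F → G be linear maps such that the map Φ : D_min × F → G, Φ(u, c) = A u + K c, is bijective, and write its inverse as Φ⁻¹ g = (B g, T g) with linear maps B : G → D_min and T : G → F. Then the restriction A|_D : D → G is bijective if and only if F₀ := T ∘ (A|_E) : E → F is bijective. Moreover, in that case, with q : D → E the projection onto E along D_min, the inverse is given by (A|_D)⁻¹ = B + (id_D − B ∘ A|_D) ∘ F₀⁻¹ ∘ T (where B and id_D − B∘A|_D are regarded as maps into D), and one has F₀⁻¹ = q ∘ (A|_D)⁻¹ ∘ K and q ∘ (A|_D)⁻¹ = F₀⁻¹ ∘ T. -/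
/-!
Write `D = Dmin ⊕ E` with inclusions `i`, `j` and projection `q` onto `E`. Since `(B, T)` inverts
`(u, c) ↦ A (i u) + K c`, the map `T ∘ A` kills `Dmin`, hence factors as `F₀ ∘ q`, while for `e : E`
the corrected element `j e - i (B (A (j e)))` has projection `e` and is sent by `A` to `K (F₀ e)`.
The first fact transports injectivity and surjectivity from `F₀` to `A`, the second back from `A`
to `F₀`; the same two facts give the inverse formulas.
-/

section

variable {R V : Type*} [Ring R] [AddCommGroup V] [Module R V]

theorem Submodule.exact_inclusion_le_sup_left {Dmin E : Submodule R V}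
    {q : ↥(Dmin ⊔ E) →ₗ[R] E}
    (hq0 : ∀ u : Dmin, q (Submodule.inclusion le_sup_left u) = 0)
    (hq1 : ∀ e : E, q (Submodule.inclusion le_sup_right e) = e) :
    Function.Exact (Submodule.inclusion (le_sup_left : Dmin ≤ Dmin ⊔ E)) q := by
  refine LinearMap.exact_of_comp_of_mem_range (LinearMap.ext hq0) fun d hd => ?_
  obtain ⟨u, hu, e, he, hsum⟩ := Submodule.mem_sup.mp d.2
  have hd_eq : d = Submodule.inclusion le_sup_left ⟨u, hu⟩ +
      Submodule.inclusion le_sup_right ⟨e, he⟩ := Subtype.ext hsum.symm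
  have he0 : (⟨e, he⟩ : E) = 0 := by rwa [hd_eq, map_add, hq0, hq1, zero_add] at hd
  exact ⟨⟨u, hu⟩, by rw [hd_eq, he0, map_zero, add_zero]⟩

end

namespace ReducedOperator

variable {R D M N G F P : Type*} [Ring R]
  [AddCommGroup D] [Module R D] [AddCommGroup M] [Module R M] [AddCommGroup N] [Module R N]
  [AddCommGroup G] [Module R G] [AddCommGroup F] [Module R F] [AddCommGroup P] [Module R P]
  {i : M →ₗ[R] D} {j : N →ₗ[R] D} {q : D →ₗ[R] N}
  {A : D →ₗ[R] G} {K : F →ₗ[R] G} {B : G →ₗ[R] M} {T : G →ₗ[R] F}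

theorem apply_eq_apply_section_proj (hiq : Function.Exact i q) (hqj : ∀ e, q (j e) = e)
    {L : D →ₗ[R] P} (hL : ∀ u, L (i u) = 0) (d : D) : L d = L (j (q d)) := by
  obtain ⟨u, hu⟩ := (hiq (d - j (q d))).1 (by rw [map_sub, hqj, sub_self])
  calc L d = L (i u + j (q d)) := by rw [hu, sub_add_cancel]
    _ = L (j (q d)) := by rw [map_add, hL, zero_add]

theorem map_map_eq_map_map_section_proj (hTAi : ∀ u, T (A (i u)) = 0)
    (hiq : Function.Exact i q) (hqj : ∀ e, q (j e) = e) (d : D) :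
    T (A d) = T (A (j (q d))) :=
  apply_eq_apply_section_proj (L := T ∘ₗ A) hiq hqj hTAi d

theorem proj_sub_section (hiq : Function.Exact i q) (hqj : ∀ e, q (j e) = e) (e : N) (u : M) :
    q (j e - i u) = e := by
  rw [map_sub, hqj, hiq.apply_apply_eq_zero, sub_zero]

theorem map_sub_section_eq (hright : ∀ g, A (i (B g)) + K (T g) = g) (e : N) :
    A (j e - i (B (A (j e)))) = K (T (A (j e))) := by
  rw [map_sub, sub_eq_iff_eq_add', hright]

theorem map_add_sub_section_eq (hright : ∀ g, A (i (B g)) + K (T g) = g) {g : G} {e : N}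
    (he : T (A (j e)) = T g) : A (i (B g) + (j e - i (B (A (j e))))) = g := by
  rw [map_add, map_sub_section_eq hright, he, hright]

theorem surjective_iff (hright : ∀ g, A (i (B g)) + K (T g) = g)
    (hTK : ∀ c, T (K c) = c) (hTAi : ∀ u, T (A (i u)) = 0)
    (hiq : Function.Exact i q) (hqj : ∀ e, q (j e) = e) :
    Function.Surjective A ↔ Function.Surjective (T ∘ₗ A ∘ₗ j) := by
  constructor
  · intro hA c
    obtain ⟨d, hd⟩ := hA (K c)
    refine ⟨q d, ?_⟩
    show T (A (j (q d))) = c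
    rw [← map_map_eq_map_map_section_proj hTAi hiq hqj, hd, hTK]
  · intro hF g
    obtain ⟨e, he⟩ := hF (T g)
    exact ⟨_, map_add_sub_section_eq hright he⟩

theorem injective_iff (hright : ∀ g, A (i (B g)) + K (T g) = g)
    (hBAi : ∀ u, B (A (i u)) = u) (hTAi : ∀ u, T (A (i u)) = 0)
    (hiq : Function.Exact i q) (hqj : ∀ e, q (j e) = e) :
    Function.Injective A ↔ Function.Injective (T ∘ₗ A ∘ₗ j) := by
  simp only [← LinearMap.ker_eq_bot, LinearMap.ker_eq_bot']
  constructor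
  · intro hA e he
    have h0 : j e - i (B (A (j e))) = 0 := hA _ (by
      rw [map_sub_section_eq hright, show T (A (j e)) = 0 from he, map_zero])
    rw [← proj_sub_section hiq hqj e (B (A (j e))), h0, map_zero]
  · intro hF d hd
    have hqd : q d = 0 := hF _ (by
      show T (A (j (q d))) = 0
      rw [← map_map_eq_map_map_section_proj hTAi hiq hqj, hd, map_zero])
    obtain ⟨u, rfl⟩ := (hiq d).1 hqd
    rw [← hBAi u, hd, map_zero, map_zero]

theorem inverse_eq (hright : ∀ g, A (i (B g)) + K (T g) = g) {Ainv : G → D} {F₀inv : F → N}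
    (hAl : ∀ d, Ainv (A d) = d) (hFr : ∀ c, T (A (j (F₀inv c))) = c) (g : G) :
    Ainv g = i (B g) + (j (F₀inv (T g)) - i (B (A (j (F₀inv (T g)))))) := by
  rw [← hAl (i (B g) + _), map_add_sub_section_eq hright (hFr (T g))]

theorem proj_inverse_eq (hTAi : ∀ u, T (A (i u)) = 0)
    (hiq : Function.Exact i q) (hqj : ∀ e, q (j e) = e) {Ainv : G → D} {F₀inv : F → N}
    (hAr : ∀ g, A (Ainv g) = g) (hFl : ∀ e, F₀inv (T (A (j e))) = e) (g : G) :
    q (Ainv g) = F₀inv (T g) := by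
  rw [← hFl (q (Ainv g)), ← map_map_eq_map_map_section_proj hTAi hiq hqj, hAr]

end ReducedOperator

open ReducedOperator in
theorem stmt0_general {G F V : Type*} [AddCommGroup G] [Module ℂ G]
    [AddCommGroup F] [Module ℂ F] [AddCommGroup V] [Module ℂ V]
    (Dmin E : Submodule ℂ V)
    (A : ↥(Dmin ⊔ E) →ₗ[ℂ] G) (K : F →ₗ[ℂ] G)
    (B : G →ₗ[ℂ] Dmin) (T : G →ₗ[ℂ] F)
    (hright : ∀ g : G,
      A (Submodule.inclusion (le_sup_left : Dmin ≤ Dmin ⊔ E) (B g)) + K (T g) = g)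
    (hleft : ∀ (u : Dmin) (c : F),
      B (A (Submodule.inclusion (le_sup_left : Dmin ≤ Dmin ⊔ E) u) + K c) = u ∧
      T (A (Submodule.inclusion (le_sup_left : Dmin ≤ Dmin ⊔ E) u) + K c) = c)
    (q : ↥(Dmin ⊔ E) →ₗ[ℂ] E)
    (hq0 : ∀ u : Dmin, q (Submodule.inclusion (le_sup_left : Dmin ≤ Dmin ⊔ E) u) = 0)
    (hq1 : ∀ e : E, q (Submodule.inclusion (le_sup_right : E ≤ Dmin ⊔ E) e) = e) :
    (Function.Bijective A ↔
      Function.Bijective (fun e : E =>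
        T (A (Submodule.inclusion (le_sup_right : E ≤ Dmin ⊔ E) e)))) ∧
    ∀ (Ainv : G →ₗ[ℂ] ↥(Dmin ⊔ E)) (F₀inv : F →ₗ[ℂ] E),
      (∀ g, A (Ainv g) = g) → (∀ d, Ainv (A d) = d) →
      (∀ c, T (A (Submodule.inclusion (le_sup_right : E ≤ Dmin ⊔ E) (F₀inv c))) = c) →
      (∀ e : E, F₀inv (T (A (Submodule.inclusion (le_sup_right : E ≤ Dmin ⊔ E) e))) = e) →
      (∀ g, Ainv g =
        Submodule.inclusion (le_sup_left : Dmin ≤ Dmin ⊔ E) (B g) +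
          (Submodule.inclusion (le_sup_right : E ≤ Dmin ⊔ E) (F₀inv (T g)) -
            Submodule.inclusion (le_sup_left : Dmin ≤ Dmin ⊔ E)
              (B (A (Submodule.inclusion (le_sup_right : E ≤ Dmin ⊔ E) (F₀inv (T g))))))) ∧
      (∀ c, F₀inv c = q (Ainv (K c))) ∧
      (∀ g, q (Ainv g) = F₀inv (T g)) := by
  have hiq := Submodule.exact_inclusion_le_sup_left hq0 hq1
  have hBAi : ∀ u, B (A (Submodule.inclusion le_sup_left u)) = u := fun u => by
    simpa using (hleft u 0).1
  have hTAi : ∀ u, T (A (Submodule.inclusion le_sup_left u)) = 0 := fun u => by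
    simpa using (hleft u 0).2
  have hTK : ∀ c, T (K c) = c := fun c => by simpa using (hleft 0 c).2
  refine ⟨and_congr (injective_iff hright hBAi hTAi hiq hq1)
    (surjective_iff hright hTK hTAi hiq hq1), fun Ainv F₀inv hAr hAl hFr hFl => ?_⟩
  have hproj := proj_inverse_eq hTAi hiq hq1 hAr hFl
  exact ⟨inverse_eq hright hAl hFr, fun c => by rw [hproj, hTK], hproj⟩

/-- Abstract reduction to the finite-dimensional quotient: bijectivity of the
realization on `D = Dmin ⊔ E` is equivalent to bijectivity of `F₀ = T ∘ A|_E`,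
and explicit formulas for the inverse. -/
theorem stmt0 {G F V : Type*} [AddCommGroup G] [Module ℂ G]
    [AddCommGroup F] [Module ℂ F] [AddCommGroup V] [Module ℂ V]
    (Dmin E : Submodule ℂ V) (hdisj : Dmin ⊓ E = ⊥)
    (A : ↥(Dmin ⊔ E) →ₗ[ℂ] G) (K : F →ₗ[ℂ] G)
    (B : G →ₗ[ℂ] Dmin) (T : G →ₗ[ℂ] F)
    (hbij : Function.Bijective (fun p : ↥Dmin × F =>
      A (Submodule.inclusion (le_sup_left : Dmin ≤ Dmin ⊔ E) p.1) + K p.2))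
    (hright : ∀ g : G,
      A (Submodule.inclusion (le_sup_left : Dmin ≤ Dmin ⊔ E) (B g)) + K (T g) = g)
    (hleft : ∀ (u : Dmin) (c : F),
      B (A (Submodule.inclusion (le_sup_left : Dmin ≤ Dmin ⊔ E) u) + K c) = u ∧
      T (A (Submodule.inclusion (le_sup_left : Dmin ≤ Dmin ⊔ E) u) + K c) = c)
    (q : ↥(Dmin ⊔ E) →ₗ[ℂ] E)
    (hq0 : ∀ u : Dmin, q (Submodule.inclusion (le_sup_left : Dmin ≤ Dmin ⊔ E) u) = 0)
    (hq1 : ∀ e : E, q (Submodule.inclusion (le_sup_right : E ≤ Dmin ⊔ E) e) = e) :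
    (Function.Bijective A ↔
      Function.Bijective (fun e : E =>
        T (A (Submodule.inclusion (le_sup_right : E ≤ Dmin ⊔ E) e)))) ∧
    ∀ (Ainv : G →ₗ[ℂ] ↥(Dmin ⊔ E)) (F₀inv : F →ₗ[ℂ] E),
      (∀ g, A (Ainv g) = g) → (∀ d, Ainv (A d) = d) →
      (∀ c, T (A (Submodule.inclusion (le_sup_right : E ≤ Dmin ⊔ E) (F₀inv c))) = c) →
      (∀ e : E, F₀inv (T (A (Submodule.inclusion (le_sup_right : E ≤ Dmin ⊔ E) e))) = e) →
      (∀ g, Ainv g =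
        Submodule.inclusion (le_sup_left : Dmin ≤ Dmin ⊔ E) (B g) +
          (Submodule.inclusion (le_sup_right : E ≤ Dmin ⊔ E) (F₀inv (T g)) -
            Submodule.inclusion (le_sup_left : Dmin ≤ Dmin ⊔ E)
              (B (A (Submodule.inclusion (le_sup_right : E ≤ Dmin ⊔ E) (F₀inv (T g))))))) ∧
      (∀ c, F₀inv c = q (Ainv (K c))) ∧
      (∀ g, q (Ainv g) = F₀inv (T g)) :=
  stmt0_general Dmin E A K B T hright hleft q hq0 hq1
end

section
/- Let V and G be vector spaces over a field, let T : V → G be linear, and let V₀ ⊆ V₁ be subspaces of V with T(V₀) = T(V₁). Let s₁, …, s_M ∈ V₁ be elements whose classes s_j + V₀ form a basis of V₁/V₀, and let u₁, …, u_M ∈ V₀ satisfy T(u_j) = T(s_j) for each j (such u_j exist since T(V₀) = T(V₁)). Then s_j − u_j ∈ V₁ ∩ ker T for every j, and the classes (s_j − u_j) + (V₀ ∩ ker T) form a basis of the quotient (V₁ ∩ ker T)/(V₀ ∩ ker T). -/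
/-- Lemma 4.3 (basis part): correcting a basis of singular functions `s j`
modulo `V₀` by elements `u j ∈ V₀` with the same boundary values yields a
basis of `(V₁ ⊓ ker T)/(V₀ ⊓ ker T)`. -/
theorem stmt3 {K V G : Type*} [Field K] [AddCommGroup V] [Module K V]
    [AddCommGroup G] [Module K G]
    (T : V →ₗ[K] G) (V₀ V₁ : Submodule K V) (h01 : V₀ ≤ V₁)
    (hT : V₀.map T = V₁.map T)
    (M : ℕ) (s : Fin M → V₁) (u : Fin M → V₀)
    (hli : LinearIndependent K (fun j =>
      (Submodule.Quotient.mk (s j) : ↥V₁ ⧸ Submodule.comap V₁.subtype V₀)))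
    (hspan : Submodule.span K (Set.range (fun j =>
      (Submodule.Quotient.mk (s j) : ↥V₁ ⧸ Submodule.comap V₁.subtype V₀))) = ⊤)
    (hu : ∀ j, T ((u j : V)) = T ((s j : V))) :
    ∃ v : Fin M → ↥(V₁ ⊓ LinearMap.ker T),
      (∀ j, (v j : V) = (s j : V) - (u j : V)) ∧
      LinearIndependent K (fun j =>
        (Submodule.Quotient.mk (v j) :
          ↥(V₁ ⊓ LinearMap.ker T) ⧸
            Submodule.comap (V₁ ⊓ LinearMap.ker T).subtype (V₀ ⊓ LinearMap.ker T))) ∧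
      Submodule.span K (Set.range (fun j =>
        (Submodule.Quotient.mk (v j) :
          ↥(V₁ ⊓ LinearMap.ker T) ⧸
            Submodule.comap (V₁ ⊓ LinearMap.ker T).subtype (V₀ ⊓ LinearMap.ker T)))) = ⊤ := by
  have hsk : ∀ j, (s j : V) - (u j : V) ∈ V₁ ⊓ LinearMap.ker T := by
    intro j
    exact ⟨Submodule.sub_mem _ (s j).2 (h01 (u j).2),
      by simp [LinearMap.mem_ker, map_sub, hu j]⟩
  set v : Fin M → ↥(V₁ ⊓ LinearMap.ker T) := fun j => ⟨(s j : V) - (u j : V), hsk j⟩ with hv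
  refine ⟨v, fun j => rfl, ?_, ?_⟩
  · rw [Fintype.linearIndependent_iff]
    intro c hc
    have h0 : ((∑ i, c i • v i : ↥(V₁ ⊓ LinearMap.ker T)) : V) ∈ V₀ ⊓ LinearMap.ker T := by
      have : Submodule.Quotient.mk (∑ i, c i • v i) = (0 :
          ↥(V₁ ⊓ LinearMap.ker T) ⧸
            Submodule.comap (V₁ ⊓ LinearMap.ker T).subtype (V₀ ⊓ LinearMap.ker T)) := by
        rw [← hc]
        simp [← Submodule.mkQ_apply, map_sum, map_smul]
        rfl
      rw [Submodule.Quotient.mk_eq_zero] at this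
      exact this
    have hcoe : ((∑ i, c i • v i : ↥(V₁ ⊓ LinearMap.ker T)) : V)
        = ∑ i, c i • ((s i : V) - (u i : V)) := by
      simp [hv]
    rw [hcoe] at h0
    have hs0 : (∑ i, c i • (s i : V)) ∈ V₀ := by
      have hu0 : (∑ i, c i • (u i : V)) ∈ V₀ :=
        Submodule.sum_mem _ (fun i _ => Submodule.smul_mem _ _ (u i).2)
      have := Submodule.add_mem _ h0.1 hu0
      simpa [smul_sub, Finset.sum_sub_distrib, sub_add_cancel] using this
    have hmk : (∑ i, c i • (Submodule.Quotient.mk (s i) :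
        ↥V₁ ⧸ Submodule.comap V₁.subtype V₀)) = 0 := by
      have : Submodule.Quotient.mk (∑ i, c i • s i) = (0 :
          ↥V₁ ⧸ Submodule.comap V₁.subtype V₀) := by
        rw [Submodule.Quotient.mk_eq_zero]
        simpa using hs0
      simpa [← Submodule.mkQ_apply, map_sum, map_smul] using this
    exact Fintype.linearIndependent_iff.mp hli c hmk
  · rw [eq_top_iff]
    rintro x -
    obtain ⟨w, rfl⟩ := Submodule.Quotient.mk_surjective _ x
    have hw1 : (w : V) ∈ V₁ := w.2.1
    have := hspan ▸ Submodule.mem_top (x := (Submodule.Quotient.mk (⟨(w : V), hw1⟩ : ↥V₁) :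
      ↥V₁ ⧸ Submodule.comap V₁.subtype V₀))
    rw [Submodule.mem_span_range_iff_exists_fun] at this
    obtain ⟨c, hc⟩ := this
    have hc' : ((w : V) - ∑ i, c i • (s i : V)) ∈ V₀ := by
      have : Submodule.Quotient.mk ((⟨(w : V), hw1⟩ : ↥V₁) - ∑ i, c i • s i) = (0 :
          ↥V₁ ⧸ Submodule.comap V₁.subtype V₀) := by
        rw [← Submodule.mkQ_apply, map_sub, map_sum]
        simp only [map_smul, Submodule.mkQ_apply]
        rw [sub_eq_zero]
        exact hc.symm
      rw [Submodule.Quotient.mk_eq_zero] at this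
      simpa using this
    have hmem : ((w - ∑ i, c i • v i : ↥(V₁ ⊓ LinearMap.ker T)) : V)
        ∈ V₀ ⊓ LinearMap.ker T := by
      refine ⟨?_, ?_⟩
      · have hcoe : ((w - ∑ i, c i • v i : ↥(V₁ ⊓ LinearMap.ker T)) : V)
            = ((w : V) - ∑ i, c i • (s i : V)) + ∑ i, c i • (u i : V) := by
          simp [hv, smul_sub, Finset.sum_sub_distrib]
          abel
        rw [hcoe]
        exact Submodule.add_mem _ hc'
          (Submodule.sum_mem _ (fun i _ => Submodule.smul_mem _ _ (u i).2))
      · have hcoe2 : ((w - ∑ i, c i • v i : ↥(V₁ ⊓ LinearMap.ker T)) : V)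
            = (w : V) - ∑ i, c i • ((v i : V)) := by
          simp
        rw [hcoe2]
        exact Submodule.sub_mem _ w.2.2
          (Submodule.sum_mem _ (fun i _ => Submodule.smul_mem _ _ (v i).2.2))
    have hdiff : (w - ∑ i, c i • v i) ∈
        Submodule.comap (V₁ ⊓ LinearMap.ker T).subtype (V₀ ⊓ LinearMap.ker T) :=
      Submodule.mem_comap.mpr hmem
    have hmk : (Submodule.Quotient.mk w :
        ↥(V₁ ⊓ LinearMap.ker T) ⧸
          Submodule.comap (V₁ ⊓ LinearMap.ker T).subtype (V₀ ⊓ LinearMap.ker T))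
        = ∑ i, c i • Submodule.Quotient.mk (v i) := by
      have : Submodule.Quotient.mk (w - ∑ i, c i • v i) = (0 :
          ↥(V₁ ⊓ LinearMap.ker T) ⧸
            Submodule.comap (V₁ ⊓ LinearMap.ker T).subtype (V₀ ⊓ LinearMap.ker T)) :=
        (Submodule.Quotient.mk_eq_zero _).mpr hdiff
      have h2 := this
      rw [← Submodule.mkQ_apply, map_sub, sub_eq_zero, map_sum] at h2
      simp only [map_smul] at h2
      exact h2
    rw [hmk]
    exact Submodule.sum_mem _ (fun i _ => Submodule.smul_mem _ _
      (Submodule.subset_span ⟨i, rfl⟩))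
end

section
/- Let H be a Hilbert space, W a Banach space, ι : W → H an injective continuous linear map, and A : W → H a continuous linear map. Fix λ ∈ ℂ and assume: (i) the kernel of A − λι : W → H is finite-dimensional; (ii) there is a closed subspace D ⊆ W such that (A − λι)|_D : D → H is bijective. Then for every sequence (u_k) in W such that (ι(u_k)) converges to some u in H and (A(u_k)) converges to some v in H, the sequence (u_k) converges in W to an element w with ι(w) = u and A(w) = v. In particular, the graph {(ι(u), A(u)) : u ∈ W} is closed in H × H, i.e., the unbounded operator on H with domain ι(W) sending ι(u) to A(u) is closed. -/
open Filter Topology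

/-- Abstract form of Propositions 4.4 and 5.5: under a finite-dimensional
kernel condition and invertibility on a closed subspace, the graph of the
unbounded operator `ι(u) ↦ A(u)` is closed. -/
theorem stmt6 {H W : Type*}
    [NormedAddCommGroup H] [InnerProductSpace ℂ H] [CompleteSpace H]
    [NormedAddCommGroup W] [NormedSpace ℂ W] [CompleteSpace W]
    (ι A : W →L[ℂ] H) (hι : Function.Injective ι) (lam : ℂ)
    (hker : FiniteDimensional ℂ (LinearMap.ker ((A - lam • ι : W →L[ℂ] H) : W →ₗ[ℂ] H)))
    (D : Submodule ℂ W) (hDclosed : IsClosed (D : Set W))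
    (hDbij : Function.Bijective (fun d : D => (A - lam • ι) (d : W))) :
    (∀ (u : ℕ → W) (u₀ v : H),
      Tendsto (fun k => ι (u k)) atTop (𝓝 u₀) →
      Tendsto (fun k => A (u k)) atTop (𝓝 v) →
      ∃ w : W, Tendsto u atTop (𝓝 w) ∧ ι w = u₀ ∧ A w = v) ∧
    IsClosed {p : H × H | ∃ u : W, p = (ι u, A u)} := by
  classical
  set T : W →L[ℂ] H := A - lam • ι with hT
  haveI : CompleteSpace D := hDclosed.completeSpace_coe
  set TD : D →L[ℂ] H := T.comp D.subtypeL with hTD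
  have hTDbij : Function.Bijective TD := hDbij
  let e : D ≃L[ℂ] H := ContinuousLinearEquiv.ofBijective TD
    (LinearMap.ker_eq_bot.mpr hTDbij.1)
    (LinearMap.range_eq_top.mpr hTDbij.2)
  have he : ∀ d : D, e d = T (d : W) := fun d => rfl
  -- kernel side
  haveI hK : FiniteDimensional ℂ (LinearMap.ker (T : W →ₗ[ℂ] H)) := hker
  let ιK : LinearMap.ker (T : W →ₗ[ℂ] H) →L[ℂ] H := ι.comp (LinearMap.ker (T : W →ₗ[ℂ] H)).subtypeL
  have hιKinj : Function.Injective ιK := by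
    intro x y hxy
    exact Subtype.ext (hι hxy)
  let φ : (LinearMap.ker (T : W →ₗ[ℂ] H)) ≃ₗ[ℂ] LinearMap.range (ιK : LinearMap.ker (T : W →ₗ[ℂ] H) →ₗ[ℂ] H) :=
    LinearEquiv.ofInjective (ιK : LinearMap.ker (T : W →ₗ[ℂ] H) →ₗ[ℂ] H) hιKinj
  let φc := φ.toContinuousLinearEquiv
  have hranclosed : IsClosed ((LinearMap.range (ιK : LinearMap.ker (T : W →ₗ[ℂ] H) →ₗ[ℂ] H)) : Set H) :=
    Submodule.closed_of_finiteDimensional _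
  have main : ∀ (u : ℕ → W) (u₀ v : H),
      Tendsto (fun k => ι (u k)) atTop (𝓝 u₀) →
      Tendsto (fun k => A (u k)) atTop (𝓝 v) →
      ∃ w : W, Tendsto u atTop (𝓝 w) ∧ ι w = u₀ ∧ A w = v := by
    intro u u₀ v hu hv
    have hTu : Tendsto (fun k => T (u k)) atTop (𝓝 (v - lam • u₀)) := by
      have := hv.sub (hu.const_smul lam)
      simpa [hT] using this
    set d : ℕ → D := fun k => e.symm (T (u k)) with hd
    have hdT : ∀ k, T ((d k : D) : W) = T (u k) := by
      intro k
      have : e (e.symm (T (u k))) = T (u k) := e.apply_symm_apply _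
      simpa [he] using this
    set dinf : D := e.symm (v - lam • u₀) with hdinf
    have hdconv : Tendsto d atTop (𝓝 dinf) :=
      (e.symm.continuous.tendsto _).comp hTu
    -- kernel components
    have hmemK : ∀ k, u k - (d k : W) ∈ LinearMap.ker (T : W →ₗ[ℂ] H) := by
      intro k
      simp [LinearMap.mem_ker, map_sub, hdT k]
    set nK : ℕ → LinearMap.ker (T : W →ₗ[ℂ] H) := fun k => ⟨u k - (d k : W), hmemK k⟩ with hnK
    have hιn : Tendsto (fun k => ιK (nK k)) atTop (𝓝 (u₀ - ι (dinf : W))) := by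
      have h1 : Tendsto (fun k => ι ((d k : D) : W)) atTop (𝓝 (ι (dinf : W))) := by
        have : Continuous fun x : D => ι (x : W) := ι.continuous.comp continuous_subtype_val
        exact (this.tendsto _).comp hdconv
      have := hu.sub h1
      simpa [ιK, map_sub, hnK] using this
    have hmemlim : u₀ - ι (dinf : W) ∈ LinearMap.range (ιK : LinearMap.ker (T : W →ₗ[ℂ] H) →ₗ[ℂ] H) := by
      refine hranclosed.mem_of_tendsto hιn (Eventually.of_forall fun k => ?_)
      exact ⟨nK k, rfl⟩
    set ninf : LinearMap.ker (T : W →ₗ[ℂ] H) := φc.symm ⟨u₀ - ι (dinf : W), hmemlim⟩ with hninf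
    have hnconv : Tendsto nK atTop (𝓝 ninf) := by
      have hsub : Tendsto (fun k => (⟨ιK (nK k), ⟨nK k, rfl⟩⟩ :
          LinearMap.range (ιK : LinearMap.ker (T : W →ₗ[ℂ] H) →ₗ[ℂ] H))) atTop
          (𝓝 ⟨u₀ - ι (dinf : W), hmemlim⟩) := by
        rw [tendsto_subtype_rng]
        exact hιn
      have := (φc.symm.continuous.tendsto _).comp hsub
      have heq : ∀ k, φc.symm ⟨ιK (nK k), ⟨nK k, rfl⟩⟩ = nK k := by
        intro k
        have : φc (nK k) = ⟨ιK (nK k), ⟨nK k, rfl⟩⟩ := rfl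
        rw [← this, φc.symm_apply_apply]
      exact this.congr heq
    refine ⟨(ninf : W) + (dinf : W), ?_, ?_, ?_⟩
    · have h1 : Tendsto (fun k => (nK k : W)) atTop (𝓝 (ninf : W)) :=
        (continuous_subtype_val.tendsto _).comp hnconv
      have h2 : Tendsto (fun k => ((d k : D) : W)) atTop (𝓝 (dinf : W)) :=
        (continuous_subtype_val.tendsto _).comp hdconv
      have := h1.add h2
      have heq : ∀ k, (nK k : W) + ((d k : D) : W) = u k := fun k => by
        simp [hnK]
      simpa [heq] using this
    all_goals {
      have hconv : Tendsto u atTop (𝓝 ((ninf : W) + (dinf : W))) := by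
        have h1 : Tendsto (fun k => (nK k : W)) atTop (𝓝 (ninf : W)) :=
          (continuous_subtype_val.tendsto _).comp hnconv
        have h2 : Tendsto (fun k => ((d k : D) : W)) atTop (𝓝 (dinf : W)) :=
          (continuous_subtype_val.tendsto _).comp hdconv
        have := h1.add h2
        have heq : ∀ k, (nK k : W) + ((d k : D) : W) = u k := fun k => by
          simp [hnK]
        simpa [heq] using this
      first
      | exact tendsto_nhds_unique ((ι.continuous.tendsto _).comp hconv) hu
      | exact tendsto_nhds_unique ((A.continuous.tendsto _).comp hconv) hv
    }
  refine ⟨main, IsSeqClosed.isClosed ?_⟩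
  intro p q hp hq
  choose u hu using hp
  have h1 : Tendsto (fun k => ι (u k)) atTop (𝓝 q.1) := by
    have := (continuous_fst.tendsto _).comp hq
    exact this.congr fun k => by simp [Function.comp_apply, hu k]
  have h2 : Tendsto (fun k => A (u k)) atTop (𝓝 q.2) := by
    have := (continuous_snd.tendsto _).comp hq
    exact this.congr fun k => by simp [Function.comp_apply, hu k]
  obtain ⟨w, -, hw1, hw2⟩ := main u q.1 q.2 h1 h2
  exact ⟨w, by rw [hw1, hw2]⟩
end

section
/- Let H be a normed vector space over ℂ and (κ_ρ)_{ρ>0} a family of isometric linear automorphisms of H with κ_ρ ∘ κ_σ = κ_{ρσ}. Let D ⊆ H be a subspace with κ_ρ(D) = D for all ρ > 0, let m > 0, and let A : D → H be linear with A(κ_ρ u) = ρ^m κ_ρ(A u) for all ρ > 0 and u ∈ D. Let Λ = {r e^{iθ} : r ≥ 0, |θ − θ₀| ≤ ε} be a closed sector in ℂ (θ₀ ∈ ℝ, ε > 0). Suppose A − μ : D → H is bijective for every μ ∈ Λ with |μ| = 1, and that M := sup{‖(A − μ)⁻¹‖_{L(H)} : μ ∈ Λ, |μ| = 1} < ∞.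 Then A − λ : D → H is bijective for every λ ∈ Λ \ {0} and ‖(A − λ)⁻¹‖_{L(H)} ≤ M |λ|⁻¹; in particular, Λ is a sector of minimal growth for A with domain D. -/
/-- Proposition 5.4 v): for a κ-homogeneous operator with κ-invariant domain,
bijectivity of `A - μ` for unit `μ` in the closed sector `Λ`, with uniformly
bounded inverses, implies that `Λ` is a sector of minimal growth:
`A - λ` is bijective for all `0 ≠ λ ∈ Λ` with `‖(A-λ)⁻¹‖ ≤ M |λ|⁻¹`. -/
theorem stmt9 {H : Type*} [NormedAddCommGroup H] [NormedSpace ℂ H]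
    (κ : ℝ → (H ≃ₗ[ℂ] H))
    (hκiso : ∀ ρ : ℝ, 0 < ρ → ∀ u : H, ‖κ ρ u‖ = ‖u‖)
    (hκmul : ∀ ρ : ℝ, 0 < ρ → ∀ σ : ℝ, 0 < σ → ∀ u : H, κ ρ (κ σ u) = κ (ρ * σ) u)
    (D : Submodule ℂ H) (hD : ∀ ρ : ℝ, 0 < ρ → D.map (κ ρ).toLinearMap = D)
    (m : ℝ) (hm : 0 < m)
    (A : D →ₗ[ℂ] H)
    (hA : ∀ ρ : ℝ, 0 < ρ → ∀ u : D, ∀ h : κ ρ (u : H) ∈ D,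
      A ⟨κ ρ (u : H), h⟩ = (((ρ ^ m : ℝ) : ℂ)) • κ ρ (A u))
    (θ₀ ε : ℝ) (hε : 0 < ε)
    (Λ : Set ℂ)
    (hΛ : Λ = {lam : ℂ | ∃ r : ℝ, 0 ≤ r ∧ ∃ θ : ℝ,
      |θ - θ₀| ≤ ε ∧ lam = (r : ℂ) * Complex.exp ((θ : ℂ) * Complex.I)})
    (hbij : ∀ μ ∈ Λ, ‖μ‖ = 1 →
      Function.Bijective (fun u : D => A u - μ • (u : H)))
    (M : ℝ)
    (hM : ∀ μ ∈ Λ, ‖μ‖ = 1 → ∀ u : D, ‖(u : H)‖ ≤ M * ‖A u - μ • (u : H)‖) :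
    ∀ lam ∈ Λ, lam ≠ 0 →
      (Function.Bijective (fun u : D => A u - lam • (u : H))) ∧
      ∀ u : D, ‖(u : H)‖ ≤ M * ‖lam‖⁻¹ * ‖A u - lam • (u : H)‖ := by
  -- basic κ facts
  have hκ1 : ∀ u : H, κ 1 u = u := by
    intro u
    have := hκmul 1 one_pos 1 one_pos u
    rw [one_mul] at this
    exact (κ 1).injective this
  have hκinv : ∀ ρ σ : ℝ, 0 < ρ → 0 < σ → ρ * σ = 1 → ∀ u : H, κ ρ (κ σ u) = u := by
    intro ρ σ hρ hσ h u
    rw [hκmul ρ hρ σ hσ u, h, hκ1]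
  have memD : ∀ ρ : ℝ, 0 < ρ → ∀ u : H, u ∈ D → κ ρ u ∈ D := by
    intro ρ hρ u hu
    rw [← hD ρ hρ]
    exact ⟨u, hu, rfl⟩
  intro lam hlam hlam0
  rw [hΛ] at hlam
  obtain ⟨r, hr, θ, hθ, hlamEq⟩ := hlam
  set μ : ℂ := Complex.exp ((θ : ℂ) * Complex.I) with hμdef
  have hμ1 : ‖μ‖ = 1 := by
    simp [hμdef, Complex.norm_exp_ofReal_mul_I]
  have hμΛ : μ ∈ Λ := by
    rw [hΛ]
    exact ⟨1, zero_le_one, θ, hθ, by simp [hμdef]⟩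
  have hr0 : 0 < r := by
    rcases hr.lt_or_eq with h | h
    · exact h
    · exfalso; apply hlam0; rw [hlamEq, ← h]; simp
  have hnormlam : ‖lam‖ = r := by
    rw [hlamEq, norm_mul, Complex.norm_real, Real.norm_eq_abs, abs_of_pos hr0, hμ1, mul_one]
  set ρ : ℝ := r ^ (1 / m) with hρdef
  have hρ : 0 < ρ := Real.rpow_pos_of_pos hr0 _
  have hρinv : (0:ℝ) < ρ⁻¹ := inv_pos.mpr hρ
  have hrho : ρ ^ m = r := by
    rw [hρdef, ← Real.rpow_mul hr, one_div_mul_cancel hm.ne', Real.rpow_one]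
  -- maps
  set Φ : D → D := fun v => ⟨κ ρ (v : H), memD ρ hρ _ v.2⟩ with hΦdef
  set Ψ : D → D := fun u => ⟨κ ρ⁻¹ (u : H), memD ρ⁻¹ hρinv _ u.2⟩ with hΨdef
  have hΦΨ : ∀ u : D, Φ (Ψ u) = u := by
    intro u
    apply Subtype.ext
    exact hκinv ρ ρ⁻¹ hρ hρinv (mul_inv_cancel₀ hρ.ne') _
  have hΨΦ : ∀ u : D, Ψ (Φ u) = u := by
    intro u
    apply Subtype.ext
    exact hκinv ρ⁻¹ ρ hρinv hρ (inv_mul_cancel₀ hρ.ne') _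
  have key : ∀ v : D,
      A (Φ v) - lam • ((Φ v : H)) = (r : ℂ) • κ ρ (A v - μ • (v : H)) := by
    intro v
    have h1 := hA ρ hρ v (memD ρ hρ _ v.2)
    have h2 : A (Φ v) = ((r : ℝ) : ℂ) • κ ρ (A v) := by
      rw [hΦdef] at *
      simpa [hrho] using h1
    rw [h2]
    have h3 : ((Φ v : H)) = κ ρ (v : H) := rfl
    rw [h3, map_sub, map_smul, smul_sub, smul_smul, hlamEq]
  -- bijectivity
  have gbij : Function.Bijective (fun w : H => (r : ℂ) • κ ρ w) := by
    have hrne : ((r : ℂ)) ≠ 0 := by exact_mod_cast hr0.ne'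
    refine Function.bijective_iff_has_inverse.mpr
      ⟨fun w => κ ρ⁻¹ ((r : ℂ)⁻¹ • w), fun w => ?_, fun w => ?_⟩
    · simp only [map_smul]
      rw [hκinv ρ⁻¹ ρ hρinv hρ (inv_mul_cancel₀ hρ.ne'), smul_smul,
        inv_mul_cancel₀ hrne, one_smul]
    · simp only [map_smul]
      rw [hκinv ρ ρ⁻¹ hρ hρinv (mul_inv_cancel₀ hρ.ne'), smul_smul,
        mul_inv_cancel₀ hrne, one_smul]
  have Ψbij : Function.Bijective Ψ :=
    Function.bijective_iff_has_inverse.mpr ⟨Φ, hΦΨ, hΨΦ⟩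
  have hcomp : (fun u : D => A u - lam • (u : H)) =
      (fun w : H => (r : ℂ) • κ ρ w) ∘ (fun v : D => A v - μ • (v : H)) ∘ Ψ := by
    funext u
    have := key (Ψ u)
    rw [hΦΨ u] at this
    exact this
  constructor
  · rw [hcomp]
    exact gbij.comp ((hbij μ hμΛ hμ1).comp Ψbij)
  · intro u
    set v : D := Ψ u with hv
    have hu : Φ v = u := hΦΨ u
    have h1 : ‖(u : H)‖ = ‖(v : H)‖ := by
      rw [← hu]
      exact hκiso ρ hρ _
    have h2 : ‖A u - lam • (u : H)‖ = r * ‖A v - μ • (v : H)‖ := by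
      rw [← hu, key v, norm_smul, hκiso ρ hρ, Complex.norm_real, Real.norm_eq_abs,
        abs_of_pos hr0]
    rw [h2, h1, hnormlam]
    calc ‖(v : H)‖ ≤ M * ‖A v - μ • (v : H)‖ := hM μ hμΛ hμ1 v
      _ = M * r⁻¹ * (r * ‖A v - μ • (v : H)‖) := by
          field_simp
end

section
/- Let H be a Hilbert space and (κ_ρ)_{ρ>0} a family of unitary operators on H with κ_ρ ∘ κ_σ = κ_{ρσ}. Let D ⊆ D_max ⊆ H be subspaces, both invariant under all κ_ρ, let m > 0, and let A : D_max → H be linear with A(κ_ρ u) = ρ^m κ_ρ(A u) for all ρ > 0 and u ∈ D_max; equip D_max with the graph norm ‖u‖_A = ‖u‖_H + ‖Au‖_H. For λ ∈ ℂ \ {0} such that A|_D − λ : D → H is bijective, write R(λ) = (A|_D − λ)⁻¹ : H → D ⊆ D_max. Then for every f ∈ H one has ‖κ_{|λ|^{1/m}}⁻¹ R(λ) f‖_A = ‖R(λ) f‖_H + |λ|⁻¹ ‖A R(λ) f‖_H. Consequently, for an unbounded set S ⊆ ℂ \ {0} on which A|_D − λ is bijective, one has ‖κ_{|λ|^{1/m}}⁻¹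 R(λ)‖_{L(H, (D_max, ‖·‖_A))} = O(|λ|⁻¹) as |λ| → ∞ in S if and only if ‖R(λ)‖_{L(H)} = O(|λ|⁻¹) as |λ| → ∞ in S. -/
/-!
Since `κ_ρ` is unitary and `A` is homogeneous of degree `m`, the operator `κ_ρ⁻¹` preserves the
`H`-norm and multiplies `‖A ·‖` by `ρ⁻ᵐ`; for `ρ = |λ|^{1/m}` this factor is `|λ|⁻¹`, which gives
the twisted graph-norm identity. Writing `A R(λ) f = f + λ R(λ) f` then shows that
`|λ|⁻¹ ‖A R(λ) f‖ ≤ |λ|⁻¹ ‖f‖ + ‖R(λ) f‖`, so the twisted graph norm of `R(λ) f` and its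
`H`-norm are bounded by each other up to `|λ|⁻¹ ‖f‖`.
-/

section Homogeneous

variable {E : Type*} [SeminormedAddCommGroup E] [NormedSpace ℂ E] {V : Submodule ℂ E}
  (A : V →ₗ[ℂ] E)

theorem norm_apply_eq_rpow_mul_of_homogeneous {κ : E ≃ₗᵢ[ℂ] E} {ρ m : ℝ} (hρ : 0 ≤ ρ)
    (hA : ∀ u : V, ∀ h : κ (u : E) ∈ V, A ⟨κ (u : E), h⟩ = ((ρ ^ m : ℝ) : ℂ) • κ (A u))
    {u v : V} (huv : κ (u : E) = v) : ‖A v‖ = ρ ^ m * ‖A u‖ := by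
  have hv : v = ⟨κ (u : E), huv ▸ v.2⟩ := Subtype.ext huv.symm
  rw [hv, hA, norm_smul, Complex.norm_real, Real.norm_of_nonneg (Real.rpow_nonneg hρ m),
    κ.norm_map]

theorem norm_add_norm_apply_eq_of_homogeneous {κ : ℝ → E ≃ₗᵢ[ℂ] E} {m : ℝ} (hm : 0 < m)
    (hA : ∀ ρ : ℝ, 0 < ρ → ∀ u : V, ∀ h : κ ρ (u : E) ∈ V,
      A ⟨κ ρ (u : E), h⟩ = ((ρ ^ m : ℝ) : ℂ) • κ ρ (A u))
    {lam : ℂ} (hlam : lam ≠ 0) {u w : V} (hw : (w : E) = (κ (‖lam‖ ^ (1 / m))).symm u) :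
    ‖(w : E)‖ + ‖A w‖ = ‖(u : E)‖ + ‖lam‖⁻¹ * ‖A u‖ := by
  have hlam' : 0 < ‖lam‖ := norm_pos_iff.mpr hlam
  have hρ : 0 < ‖lam‖ ^ (1 / m) := Real.rpow_pos_of_pos hlam' _
  have hAu : ‖A u‖ = ‖lam‖ * ‖A w‖ := by
    rw [norm_apply_eq_rpow_mul_of_homogeneous A hρ.le (hA _ hρ) (u := w) (v := u)
      (by rw [hw, LinearIsometryEquiv.apply_symm_apply]), one_div,
      Real.rpow_inv_rpow hlam'.le hm.ne']
  rw [hw, LinearIsometryEquiv.norm_map, hAu, inv_mul_cancel_left₀ hlam'.ne']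

end Homogeneous

theorem inv_norm_mul_norm_le_of_sub_smul_eq {𝕜 E : Type*} [NormedField 𝕜]
    [SeminormedAddCommGroup E] [NormedSpace 𝕜 E] {lam : 𝕜} (hlam : lam ≠ 0) {x y f : E} (h : x - lam • y = f) :
    ‖lam‖⁻¹ * ‖x‖ ≤ ‖lam‖⁻¹ * ‖f‖ + ‖y‖ := by
  have hlam' : 0 < ‖lam‖ := norm_pos_iff.mpr hlam
  calc ‖lam‖⁻¹ * ‖x‖ = ‖lam‖⁻¹ * ‖f + lam • y‖ := by rw [← h, sub_add_cancel]
    _ ≤ ‖lam‖⁻¹ * (‖f‖ + ‖lam‖ * ‖y‖) := by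
      gcongr
      exact (norm_add_le _ _).trans_eq (by rw [norm_smul])
    _ = ‖lam‖⁻¹ * ‖f‖ + ‖y‖ := by rw [mul_add, inv_mul_cancel_left₀ hlam'.ne']

theorem stmt10_general {H : Type*} [NormedAddCommGroup H] [InnerProductSpace ℂ H]
    (κ : ℝ → (H ≃ₗᵢ[ℂ] H))
    (D Dmax : Submodule ℂ H) (hDle : D ≤ Dmax)
    (hDmaxinv : ∀ ρ : ℝ, 0 < ρ → Dmax.map (κ ρ).toLinearEquiv.toLinearMap = Dmax)
    (m : ℝ) (hm : 0 < m)
    (A : Dmax →ₗ[ℂ] H)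
    (hA : ∀ ρ : ℝ, 0 < ρ → ∀ u : Dmax, ∀ h : κ ρ (u : H) ∈ Dmax,
      A ⟨κ ρ (u : H), h⟩ = (((ρ ^ m : ℝ) : ℂ)) • κ ρ (A u)) :
    -- pointwise twisted graph-norm identity for the resolvent
    (∀ lam : ℂ, lam ≠ 0 →
      Function.Bijective
        (fun u : D => A (Submodule.inclusion hDle u) - lam • (u : H)) →
      ∀ (Rf : D) (f : H),
        A (Submodule.inclusion hDle Rf) - lam • ((Rf : D) : H) = f →
        ∀ w : Dmax, (w : H) = (κ (‖lam‖ ^ (1 / m))).symm ((Rf : D) : H) →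
          ‖(w : H)‖ + ‖A w‖ =
            ‖((Rf : D) : H)‖ + ‖lam‖⁻¹ * ‖A (Submodule.inclusion hDle Rf)‖) ∧
    -- consequently, the two O(|λ|⁻¹) estimates are equivalent on unbounded sets
    ∀ (S : Set ℂ), (∀ lam ∈ S, lam ≠ 0) → (∀ r : ℝ, ∃ lam ∈ S, r ≤ ‖lam‖) →
      ∀ (R : ℂ → H → D),
        (∀ lam ∈ S, Function.Bijective
          (fun u : D => A (Submodule.inclusion hDle u) - lam • (u : H))) →
        (∀ lam ∈ S, ∀ f : H,
          A (Submodule.inclusion hDle (R lam f)) - lam • ((R lam f : D) : H) = f) →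
        ((∃ C > 0, ∃ r : ℝ, ∀ lam ∈ S, r ≤ ‖lam‖ → ∀ f : H, ∀ w : Dmax,
            (w : H) = (κ (‖lam‖ ^ (1 / m))).symm ((R lam f : D) : H) →
            ‖(w : H)‖ + ‖A w‖ ≤ C * ‖lam‖⁻¹ * ‖f‖) ↔
          (∃ C > 0, ∃ r : ℝ, ∀ lam ∈ S, r ≤ ‖lam‖ → ∀ f : H,
            ‖((R lam f : D) : H)‖ ≤ C * ‖lam‖⁻¹ * ‖f‖)) := by
  have twisted : ∀ lam : ℂ, lam ≠ 0 → ∀ (u : D) (w : Dmax),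
      (w : H) = (κ (‖lam‖ ^ (1 / m))).symm (u : H) →
        ‖(w : H)‖ + ‖A w‖ = ‖(u : H)‖ + ‖lam‖⁻¹ * ‖A (Submodule.inclusion hDle u)‖ :=
    fun lam hlam u _ hw =>
      norm_add_norm_apply_eq_of_homogeneous A hm hA hlam (u := Submodule.inclusion hDle u) hw
  refine ⟨fun lam hlam _ Rf _ _ w hw => twisted lam hlam Rf w hw, ?_⟩
  intro S hS0 _ R _ hres
  constructor
  · rintro ⟨C, hC, r, hest⟩
    refine ⟨C, hC, r, fun lam hlam hr f => ?_⟩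
    have hρ : 0 < ‖lam‖ ^ (1 / m) := Real.rpow_pos_of_pos (norm_pos_iff.mpr (hS0 lam hlam)) _
    have hmem : (κ (‖lam‖ ^ (1 / m))).symm (R lam f : H) ∈ Dmax := by
      have h := hDle (R lam f).2
      rwa [← hDmaxinv _ hρ, Submodule.mem_map_equiv] at h
    have hbound := hest lam hlam hr f ⟨_, hmem⟩ rfl
    rw [twisted lam (hS0 lam hlam) _ _ rfl] at hbound
    have : 0 ≤ ‖lam‖⁻¹ * ‖A (Submodule.inclusion hDle (R lam f))‖ := by positivity
    linarith
  · rintro ⟨C, hC, r, hest⟩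
    refine ⟨2 * C + 1, by positivity, r, fun lam hlam hr f w hw => ?_⟩
    have hAR := inv_norm_mul_norm_le_of_sub_smul_eq (hS0 lam hlam) (hres lam hlam f)
    have hR := hest lam hlam hr f
    have : 0 ≤ ‖lam‖⁻¹ * ‖f‖ := by positivity
    rw [twisted lam (hS0 lam hlam) _ w hw]
    linarith

/-- Equivalence of conditions i) and ii) of Proposition 5.4: the twisted
graph-norm of the resolvent satisfies
`‖κ_{|λ|^{1/m}}⁻¹ R(λ) f‖_A = ‖R(λ) f‖ + |λ|⁻¹ ‖A R(λ) f‖`, and hence the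
twisted graph-norm estimate `O(|λ|⁻¹)` is equivalent to the plain resolvent
estimate `O(|λ|⁻¹)`. -/
theorem stmt10 {H : Type*} [NormedAddCommGroup H] [InnerProductSpace ℂ H]
    [CompleteSpace H]
    (κ : ℝ → (H ≃ₗᵢ[ℂ] H))
    (hκmul : ∀ ρ : ℝ, 0 < ρ → ∀ σ : ℝ, 0 < σ → ∀ u : H, κ ρ (κ σ u) = κ (ρ * σ) u)
    (D Dmax : Submodule ℂ H) (hDle : D ≤ Dmax)
    (hDinv : ∀ ρ : ℝ, 0 < ρ → D.map (κ ρ).toLinearEquiv.toLinearMap = D)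
    (hDmaxinv : ∀ ρ : ℝ, 0 < ρ → Dmax.map (κ ρ).toLinearEquiv.toLinearMap = Dmax)
    (m : ℝ) (hm : 0 < m)
    (A : Dmax →ₗ[ℂ] H)
    (hA : ∀ ρ : ℝ, 0 < ρ → ∀ u : Dmax, ∀ h : κ ρ (u : H) ∈ Dmax,
      A ⟨κ ρ (u : H), h⟩ = (((ρ ^ m : ℝ) : ℂ)) • κ ρ (A u)) :
    -- pointwise twisted graph-norm identity for the resolvent
    (∀ lam : ℂ, lam ≠ 0 →
      Function.Bijective
        (fun u : D => A (Submodule.inclusion hDle u) - lam • (u : H)) →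
      ∀ (Rf : D) (f : H),
        A (Submodule.inclusion hDle Rf) - lam • ((Rf : D) : H) = f →
        ∀ w : Dmax, (w : H) = (κ (‖lam‖ ^ (1 / m))).symm ((Rf : D) : H) →
          ‖(w : H)‖ + ‖A w‖ =
            ‖((Rf : D) : H)‖ + ‖lam‖⁻¹ * ‖A (Submodule.inclusion hDle Rf)‖) ∧
    -- consequently, the two O(|λ|⁻¹) estimates are equivalent on unbounded sets
    ∀ (S : Set ℂ), (∀ lam ∈ S, lam ≠ 0) → (∀ r : ℝ, ∃ lam ∈ S, r ≤ ‖lam‖) →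
      ∀ (R : ℂ → H → D),
        (∀ lam ∈ S, Function.Bijective
          (fun u : D => A (Submodule.inclusion hDle u) - lam • (u : H))) →
        (∀ lam ∈ S, ∀ f : H,
          A (Submodule.inclusion hDle (R lam f)) - lam • ((R lam f : D) : H) = f) →
        ((∃ C > 0, ∃ r : ℝ, ∀ lam ∈ S, r ≤ ‖lam‖ → ∀ f : H, ∀ w : Dmax,
            (w : H) = (κ (‖lam‖ ^ (1 / m))).symm ((R lam f : D) : H) →
            ‖(w : H)‖ + ‖A w‖ ≤ C * ‖lam‖⁻¹ * ‖f‖) ↔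
          (∃ C > 0, ∃ r : ℝ, ∀ lam ∈ S, r ≤ ‖lam‖ → ∀ f : H,
            ‖((R lam f : D) : H)‖ ≤ C * ‖lam‖⁻¹ * ‖f‖)) :=
  stmt10_general κ D Dmax hDle hDmaxinv m hm A hA
end
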